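/- arXiv:1110.6416 — 6 statements merged into one kernel-verified Lean document; each statement's English description precedes it below -/
import Mathlib

section
/- For any probability vector w on {1,...,K}, loss vector ℓ ∈ [0,1]^K, and η ∈ (0,1], the per-round mixability gap satisfies w·ℓ + (1/η)·ln(w·e^{-ηℓ}) ≤ f(η) · (−ln(w·e^{-ηℓ})), where f(η) = 1/(1−e^{-η}) − 1/η. -/
theorem mixability_gap_le_f (K : ℕ) (hK : 0 < K)
    (w ℓ : Fin K → ℝ) (η : ℝ) (hη : η ∈ Set.Ioc (0:ℝ) 1)
    (hw : ∀ k, 0 ≤ w k) (hw1 : ∑ k, w k = 1)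
    (hℓ : ∀ k, ℓ k ∈ Set.Icc (0:ℝ) 1) :
    (∑ k, w k * ℓ k) + (1/η) * Real.log (∑ k, w k * Real.exp (-η * ℓ k)) ≤
      (1/(1 - Real.exp (-η)) - 1/η) * (- Real.log (∑ k, w k * Real.exp (-η * ℓ k))) := by
  obtain ⟨hη0, hη1⟩ := hη
  set c : ℝ := 1 - Real.exp (-η) with hc_def
  set W : ℝ := ∑ k, w k * Real.exp (-η * ℓ k) with hW_def
  set L : ℝ := ∑ k, w k * ℓ k with hL_def
  have hc : 0 < c := by
    have : Real.exp (-η) < 1 := Real.exp_lt_one_iff.2 (by linarith)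
    simp [hc_def]; linarith
  -- pointwise convexity bound: exp(-η * ℓ k) ≤ 1 - c * ℓ k
  have hpt : ∀ k, Real.exp (-η * ℓ k) ≤ 1 - c * ℓ k := by
    intro k
    obtain ⟨h0, h1⟩ := hℓ k
    have := convexOn_exp.2 (Set.mem_univ (0:ℝ)) (Set.mem_univ (-η))
      (by linarith : (0:ℝ) ≤ 1 - ℓ k) h0 (by ring)
    simp only [smul_eq_mul, mul_zero, zero_add, Real.exp_zero] at this
    rw [show ℓ k * (-η) = -η * ℓ k from by ring] at this
    calc Real.exp (-η * ℓ k) ≤ (1 - ℓ k) * 1 + ℓ k * Real.exp (-η) := this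
      _ = 1 - c * ℓ k := by simp [hc_def]; ring
  have hWle : W ≤ 1 - c * L := by
    have : W ≤ ∑ k, w k * (1 - c * ℓ k) :=
      Finset.sum_le_sum fun k _ => mul_le_mul_of_nonneg_left (hpt k) (hw k)
    calc W ≤ ∑ k, w k * (1 - c * ℓ k) := this
      _ = (∑ k, w k) - c * ∑ k, w k * ℓ k := by
          rw [Finset.mul_sum, ← Finset.sum_sub_distrib]
          congr 1; ext k; ring
      _ = 1 - c * L := by rw [hw1]
  have hWlb : Real.exp (-η) ≤ W := by
    have : ∀ k ∈ Finset.univ, w k * Real.exp (-η) ≤ w k * Real.exp (-η * ℓ k) := by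
      intro k _
      apply mul_le_mul_of_nonneg_left _ (hw k)
      apply Real.exp_le_exp.2
      have := (hℓ k).2
      nlinarith
    calc Real.exp (-η) = ∑ k, w k * Real.exp (-η) := by
          rw [← Finset.sum_mul, hw1, one_mul]
      _ ≤ W := Finset.sum_le_sum this
  have hWpos : 0 < W := lt_of_lt_of_le (Real.exp_pos _) hWlb
  have hlog : Real.log W ≤ -(c * L) := by
    have h1 : Real.log W ≤ Real.log (1 - c * L) :=
      Real.log_le_log hWpos hWle
    have h2 : Real.log (1 - c * L) ≤ (1 - c * L) - 1 :=
      Real.log_le_sub_one_of_pos (lt_of_lt_of_le hWpos hWle)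
    linarith
  have hLdiv : L ≤ (- Real.log W) / c := (le_div_iff₀ hc).2 (by linarith)
  have hrw : (1/c - 1/η) * (- Real.log W) = (- Real.log W)/c + (1/η) * Real.log W := by
    field_simp
    ring
  rw [hrw]
  linarith
end

section
/- Let losses ℓ_t^k ∈ [0,1] for t = 1,...,T and k = 1,...,K, let η ∈ (0,1], and define Hedge weights w_t^k = e^{-η L_{t-1}^k}/Σ_{k'} e^{-η L_{t-1}^{k'}}, where L_t^k = Σ_{s≤t} ℓ_s^k. Then the cumulative mixability gap Δ_T(η) = Σ_{t=1}^T (w_t·ℓ_t + (1/η)ln(w_t·e^{-ηℓ_t})) satisfies Δ_T(η) ≤ (η L_T^* + ln K)/(e−1), where L_T^* = min_k L_T^k. -/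
/-!
Convexity of `x ↦ e^{-ηx}` on `[0, 1]` gives `w·e^{-ηℓ} ≤ 1 - (1 - e^{-η}) w·ℓ`, so each round's
mixability gap is at most `f(η) = 1/(1 - e^{-η}) - 1/η` times its mix loss `-ln(w·e^{-ηℓ})`.
Since `f` is increasing (its derivative is nonnegative because `y ≤ 2 sinh (y/2)`),
`f(η) ≤ f(1) = 1/(e - 1)`. For Hedge the mix losses telescope to `ln K - ln Σ_k e^{-η L_T^k}`,
which is at most `ln K + η L_T^*`.
-/

open Real Finset

/-- The paper's `f(η)`: a round's mixability gap is at most `f(η)` times its mix loss. -/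
noncomputable def mixabilityGapFactor (η : ℝ) : ℝ := (1 - exp (-η))⁻¹ - η⁻¹

lemma mixabilityGapFactor_one : mixabilityGapFactor 1 = (exp 1 - 1)⁻¹ := by
  have : exp 1 - 1 ≠ 0 := (sub_pos.2 (one_lt_exp_iff.2 one_pos)).ne'
  rw [mixabilityGapFactor, exp_neg, inv_one]
  field_simp
  ring

lemma sq_mul_exp_neg_le_one_sub_exp_neg_sq {y : ℝ} (hy : 0 ≤ y) :
    y ^ 2 * exp (-y) ≤ (1 - exp (-y)) ^ 2 := by
  -- `1 - e^{-y} = 2 e^{-y/2} sinh (y/2)` and `y/2 ≤ sinh (y/2)`.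
  have hsinh : y / 2 ≤ sinh (y / 2) := self_le_sinh_iff.2 (by linarith)
  have hsplit : 1 - exp (-y) = exp (-(y / 2)) * (2 * sinh (y / 2)) := by
    have : exp (-(y / 2)) * (2 * sinh (y / 2))
        = exp (-(y / 2) + y / 2) - exp (-(y / 2) + -(y / 2)) := by
      rw [sinh_eq, exp_add, exp_add]; ring
    rw [this, neg_add_cancel, exp_zero, ← neg_add, add_halves]
  have hhalf : exp (-y) = exp (-(y / 2)) ^ 2 := by rw [← exp_nat_mul]; ring_nf
  rw [hsplit, hhalf, ← mul_pow, mul_comm y]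
  gcongr
  linarith

lemma hasDerivAt_mixabilityGapFactor {y : ℝ} (hy : 0 < y) :
    HasDerivAt mixabilityGapFactor ((y ^ 2)⁻¹ - exp (-y) / (1 - exp (-y)) ^ 2) y := by
  have hexp : HasDerivAt (fun z => 1 - exp (-z)) (exp (-y)) y := by
    simpa using ((hasDerivAt_neg y).exp).const_sub 1
  have hne : 1 - exp (-y) ≠ 0 := (sub_pos.2 (exp_lt_one_iff.2 (neg_lt_zero.2 hy))).ne'
  exact ((hexp.inv hne).sub (hasDerivAt_inv hy.ne')).congr_deriv (by ring)

lemma monotoneOn_mixabilityGapFactor : MonotoneOn mixabilityGapFactor (Set.Ioi 0) := by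
  refine monotoneOn_of_deriv_nonneg (convex_Ioi 0) ?_ ?_ ?_
  · exact fun y hy => (hasDerivAt_mixabilityGapFactor hy).continuousAt.continuousWithinAt
  · rw [interior_Ioi]
    exact fun y hy => (hasDerivAt_mixabilityGapFactor hy).differentiableAt.differentiableWithinAt
  · rw [interior_Ioi]
    intro y (hy : 0 < y)
    have hpos : 0 < 1 - exp (-y) := sub_pos.2 (exp_lt_one_iff.2 (neg_lt_zero.2 hy))
    have hle : exp (-y) / (1 - exp (-y)) ^ 2 ≤ 1 / y ^ 2 := by
      rw [div_le_div_iff₀ (by positivity) (by positivity), one_mul, mul_comm]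
      exact sq_mul_exp_neg_le_one_sub_exp_neg_sq hy.le
    rw [(hasDerivAt_mixabilityGapFactor hy).deriv, ← one_div]
    linarith

lemma mixabilityGapFactor_le {η : ℝ} (hη : η ∈ Set.Ioc 0 1) :
    mixabilityGapFactor η ≤ (exp 1 - 1)⁻¹ :=
  mixabilityGapFactor_one ▸
    monotoneOn_mixabilityGapFactor hη.1 (Set.mem_Ioi.2 one_pos) hη.2

lemma exp_neg_mul_le_one_sub_mul (η : ℝ) {x : ℝ} (hx : x ∈ Set.Icc (0 : ℝ) 1) :
    exp (-η * x) ≤ 1 - (1 - exp (-η)) * x := by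
  have hchord := convexOn_exp.2 (Set.mem_univ (-η)) (Set.mem_univ 0) hx.1 (sub_nonneg.2 hx.2)
    (add_sub_cancel x 1)
  simp only [smul_eq_mul, mul_zero, add_zero, exp_zero, mul_one] at hchord
  rw [mul_comm (-η)]
  linarith

lemma add_inv_mul_log_le_mixabilityGapFactor_mul {η E P : ℝ} (hη : 0 < η) (hP : 0 < P)
    (hPE : P ≤ 1 - (1 - exp (-η)) * E) :
    E + η⁻¹ * log P ≤ mixabilityGapFactor η * -log P := by
  have hc : 0 < 1 - exp (-η) := sub_pos.2 (exp_lt_one_iff.2 (neg_lt_zero.2 hη))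
  have hE : E ≤ (1 - exp (-η))⁻¹ * -log P := by
    rw [← div_eq_inv_mul, le_div_iff₀ hc]
    linarith [log_le_sub_one_of_pos hP]
  rw [mixabilityGapFactor, sub_mul]
  linarith

section

variable {ι : Type*} [Fintype ι] {w ℓ : ι → ℝ}

lemma sum_mul_exp_neg_mul_le (η : ℝ) (hw : ∀ k, 0 ≤ w k) (hw₁ : ∑ k, w k = 1)
    (hℓ : ∀ k, ℓ k ∈ Set.Icc (0 : ℝ) 1) :
    ∑ k, w k * exp (-η * ℓ k) ≤ 1 - (1 - exp (-η)) * ∑ k, w k * ℓ k :=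
  calc ∑ k, w k * exp (-η * ℓ k) ≤ ∑ k, w k * (1 - (1 - exp (-η)) * ℓ k) :=
        sum_le_sum fun k _ =>
          mul_le_mul_of_nonneg_left (exp_neg_mul_le_one_sub_mul η (hℓ k)) (hw k)
    _ = 1 - (1 - exp (-η)) * ∑ k, w k * ℓ k := by
        simp only [mul_sub, mul_one, sum_sub_distrib, hw₁, mul_sum]
        congr 1
        exact sum_congr rfl fun k _ => by ring

lemma exp_neg_le_sum_mul_exp_neg_mul {η : ℝ} (hη : 0 ≤ η) (hw : ∀ k, 0 ≤ w k)
    (hw₁ : ∑ k, w k = 1) (hℓ : ∀ k, ℓ k ∈ Set.Icc (0 : ℝ) 1) :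
    exp (-η) ≤ ∑ k, w k * exp (-η * ℓ k) :=
  calc exp (-η) = ∑ k, w k * exp (-η) := by rw [← sum_mul, hw₁, one_mul]
    _ ≤ ∑ k, w k * exp (-η * ℓ k) := sum_le_sum fun k _ => mul_le_mul_of_nonneg_left
        (exp_le_exp.2 (by nlinarith [(hℓ k).2])) (hw k)

lemma mixabilityGap_le {η : ℝ} (hη : η ∈ Set.Ioc (0 : ℝ) 1) (hw : ∀ k, 0 ≤ w k)
    (hw₁ : ∑ k, w k = 1) (hℓ : ∀ k, ℓ k ∈ Set.Icc (0 : ℝ) 1) :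
    ∑ k, w k * ℓ k + η⁻¹ * log (∑ k, w k * exp (-η * ℓ k))
      ≤ (exp 1 - 1)⁻¹ * -log (∑ k, w k * exp (-η * ℓ k)) := by
  set P := ∑ k, w k * exp (-η * ℓ k)
  have hP : 0 < P := (exp_pos _).trans_le (exp_neg_le_sum_mul_exp_neg_mul hη.1.le hw hw₁ hℓ)
  have hPE := sum_mul_exp_neg_mul_le η hw hw₁ hℓ
  have hP₁ : P ≤ 1 := by
    have : 0 ≤ (1 - exp (-η)) * ∑ k, w k * ℓ k :=
      mul_nonneg (sub_nonneg.2 (exp_le_one_iff.2 (by linarith [hη.1])))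
        (sum_nonneg fun k _ => mul_nonneg (hw k) (hℓ k).1)
    linarith
  calc _ ≤ mixabilityGapFactor η * -log P :=
        add_inv_mul_log_le_mixabilityGapFactor_mul hη.1 hP hPE
    _ ≤ (exp 1 - 1)⁻¹ * -log P :=
        mul_le_mul_of_nonneg_right (mixabilityGapFactor_le hη)
          (neg_nonneg.2 (log_nonpos hP.le hP₁))

lemma sum_exp_div_sum_exp_mul_exp (a b : ι → ℝ) :
    ∑ k, exp (a k) / (∑ k', exp (a k')) * exp (b k)
      = (∑ k, exp (a k + b k)) / ∑ k, exp (a k) := by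
  simp only [div_mul_eq_mul_div, ← exp_add, sum_div]

end

lemma le_log_sum_exp {ι : Type*} {s : Finset ι} (a : ι → ℝ) {i : ι} (hi : i ∈ s) :
    a i ≤ log (∑ k ∈ s, exp (a k)) := by
  rw [← log_exp (a i)]
  exact log_le_log (exp_pos _) (single_le_sum (fun k _ => (exp_pos (a k)).le) hi)

theorem cumulative_mixability_gap_bound (K T : ℕ) (hK : 0 < K)
    (ℓ : ℕ → Fin K → ℝ) (η : ℝ) (hη : η ∈ Set.Ioc (0:ℝ) 1)
    (hℓ : ∀ t k, ℓ t k ∈ Set.Icc (0:ℝ) 1)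
    (L : ℕ → Fin K → ℝ) (hL : ∀ t k, L t k = ∑ s ∈ Finset.range t, ℓ s k)
    (w : ℕ → Fin K → ℝ)
    (hw : ∀ t k, w t k = Real.exp (-η * L t k) / ∑ k', Real.exp (-η * L t k'))
    (Lstar : ℝ) (hLstar : Lstar = Finset.univ.inf' (Finset.univ_nonempty_iff.2 ⟨⟨0, hK⟩⟩) (L T)) :
    (∑ t ∈ Finset.range T,
        ((∑ k, w t k * ℓ t k) + (1/η) * Real.log (∑ k, w t k * Real.exp (-η * ℓ t k))))
      ≤ (η * Lstar + Real.log K) / (Real.exp 1 - 1) := by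
  have : Nonempty (Fin K) := ⟨⟨0, hK⟩⟩
  set S : ℕ → ℝ := fun t => ∑ k, exp (-η * L t k)
  have hS : ∀ t, 0 < S t := fun t => sum_pos (fun k _ => exp_pos _) univ_nonempty
  have hw₀ : ∀ t k, 0 ≤ w t k := fun t k => hw t k ▸ div_nonneg (exp_pos _).le (hS t).le
  have hw₁ : ∀ t, ∑ k, w t k = 1 := fun t => by
    simp only [hw, ← sum_div]; exact div_self (hS t).ne'
  have hmix : ∀ t, ∑ k, w t k * exp (-η * ℓ t k) = S (t + 1) / S t := fun t => by
    simp only [hw, sum_exp_div_sum_exp_mul_exp, S, hL, sum_range_succ, mul_add]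
  have hround : ∀ t, ∑ k, w t k * ℓ t k + 1 / η * log (∑ k, w t k * exp (-η * ℓ t k))
      ≤ (exp 1 - 1)⁻¹ * (log (S t) - log (S (t + 1))) := fun t => by
    simpa only [one_div, hmix, log_div (hS (t + 1)).ne' (hS t).ne', neg_sub]
      using mixabilityGap_le hη (hw₀ t) (hw₁ t) (hℓ t)
  have hS₀ : S 0 = K := by simp [S, hL]
  obtain ⟨k₀, -, hk₀⟩ := exists_mem_eq_inf' univ_nonempty (L T)
  have hST : -η * Lstar ≤ log (S T) :=
    hLstar ▸ hk₀ ▸ le_log_sum_exp (fun k => -η * L T k) (mem_univ k₀)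
  calc _ ≤ ∑ t ∈ range T, (exp 1 - 1)⁻¹ * (log (S t) - log (S (t + 1))) :=
        sum_le_sum fun t _ => hround t
    _ = (exp 1 - 1)⁻¹ * (log (S 0) - log (S T)) := by rw [← mul_sum, sum_range_sub']
    _ ≤ (exp 1 - 1)⁻¹ * (η * Lstar + log K) := by
        gcongr
        · exact inv_nonneg.2 (sub_nonneg.2 (one_le_exp zero_le_one))
        · rw [hS₀]; linarith
    _ = _ := inv_mul_eq_div _ _
end

section
/- Suppose Hedge is run with learning rate η ∈ (0,1] on losses in [0,1], and after T rounds the cumulative mixability gap satisfies b(η) ≤ Δ_T(η) < b(η) + η/8 where b(η) = (1/η + 1/(e−1))·ln K. Then η ≥ √((e−1)·ln(K)/L_T^*), and the regret R(T) = Σ_t w_t·ℓ_t − L_T^* is bounded by R(T) < √(4/(e−1)·L_T^*·ln K) + ln(K)/(e−1) + 1/8. -/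
/-!
With the Hedge potential `Z_t = ∑ₖ exp (-η L_t^k)`, the mix loss
`m_t = -(1/η) ln (w_t · e^{-η ℓ_t})` equals `(1/η) ln (Z_t / Z_{t+1})`, so it telescopes to
`(1/η) ln (K / Z_T) ≤ L_T^* + (ln K)/η`. Convexity of `exp` on `[0, 1]` gives
`ln (w_t · e^{-η ℓ_t}) ≤ -(1 - e^{-η}) w_t · ℓ_t`, and on `(0, 1]` one has
`(e - 1) η ≤ (e - 1 + η)(1 - e^{-η})`; together they bound each round's mixability gap by
`η/(e-1) · m_t`, whence `Δ_T(η) ≤ (η L_T^* + ln K)/(e - 1)`. Against the lower budget this forces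
`η² L_T^* ≥ (e - 1) ln K`; the regret is `Δ_T(η) + ∑ m_t - L_T^* ≤ Δ_T(η) + (ln K)/η`, and the
upper budget together with `(ln K)/η ≤ √((e-1)⁻¹ L_T^* ln K)` finishes.
-/

open Real Finset

namespace Hedge

lemma exp_one_sub_one_pos : 0 < exp 1 - 1 := sub_pos.2 (one_lt_exp_iff.2 one_pos)

lemma exp_one_sub_one_add_le_of_le_four_fifths {x : ℝ} (hx0 : 0 ≤ x) (hx : x ≤ 4 / 5) :
    exp 1 - 1 + x ≤ exp x * (exp 1 - 1 - (exp 1 - 2) * x) := by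
  have he₁ := exp_one_lt_d9
  have he₂ := exp_one_gt_d9
  have htaylor : 1 + x + x ^ 2 / 2 + x ^ 3 / 6 ≤ exp x := by
    have := sum_le_exp_of_nonneg hx0 4
    norm_num [Finset.sum_range_succ, Nat.factorial] at this
    linarith
  have hpos : 0 < exp 1 - 1 - (exp 1 - 2) * x := by nlinarith
  have hquad : 0 ≤ 3 * (3 - exp 1) + (5 - 2 * exp 1) * x - (exp 1 - 2) * x ^ 2 := by
    nlinarith [mul_nonneg (sub_nonneg.2 hx) (by linarith : (0 : ℝ) ≤ 2 * exp 1 - 5),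
      mul_nonneg (mul_nonneg (sub_nonneg.2 hx) (by linarith : (0 : ℝ) ≤ 4 / 5 + x))
        (by linarith : (0 : ℝ) ≤ exp 1 - 2)]
  nlinarith [mul_le_mul_of_nonneg_right htaylor hpos.le, mul_nonneg (sq_nonneg x) hquad]

lemma exp_one_sub_one_add_le_of_four_fifths_le {x : ℝ} (hx : 4 / 5 ≤ x) (hx1 : x ≤ 1) :
    exp 1 - 1 + x ≤ exp x * (exp 1 - 1 - (exp 1 - 2) * x) := by
  have he₁ := exp_one_lt_d9
  have he₂ := exp_one_gt_d9
  obtain ⟨s, rfl⟩ : ∃ s, x = 1 - s := ⟨1 - x, by ring⟩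
  have hs0 : 0 ≤ s := by linarith
  have hs1 : s ≤ 1 / 5 := by linarith
  have htaylor : exp s ≤ 1 + s + s ^ 2 / 2 + 2 / 9 * s ^ 3 := by
    have := exp_bound' hs0 (by linarith) (n := 3) (by norm_num)
    norm_num [Finset.sum_range_succ, Nat.factorial] at this
    linarith
  have hcubic : 0 ≤ (exp 1 ^ 2 - 3 * exp 1 + 1) - (exp 1 / 2 - 1) * s
      - (2 * exp 1 / 9 - 1 / 2) * s ^ 2 + 2 / 9 * s ^ 3 := by
    nlinarith [mul_nonneg (sub_nonneg.2 hs1) (by linarith : (0 : ℝ) ≤ exp 1 / 2 - 1),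
      mul_nonneg (mul_nonneg (sub_nonneg.2 hs1) (by linarith : (0 : ℝ) ≤ 1 / 5 + s))
        (by linarith : (0 : ℝ) ≤ 2 * exp 1 / 9 - 1 / 2),
      pow_nonneg hs0 3, mul_pos (sub_pos.2 he₂) (sub_pos.2 he₂)]
  have hprod : exp (1 - s) * exp s = exp 1 := by rw [← exp_add]; ring_nf
  refine le_of_mul_le_mul_right ?_ (exp_pos s)
  calc (exp 1 - 1 + (1 - s)) * exp s
      ≤ (exp 1 - 1 + (1 - s)) * (1 + s + s ^ 2 / 2 + 2 / 9 * s ^ 3) :=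
        mul_le_mul_of_nonneg_left htaylor (by linarith)
    _ ≤ exp 1 * (exp 1 - 1 - (exp 1 - 2) * (1 - s)) := by nlinarith [mul_nonneg hs0 hcubic]
    _ = exp (1 - s) * (exp 1 - 1 - (exp 1 - 2) * (1 - s)) * exp s := by rw [← hprod]; ring

/-- Both sides agree at `0` and `1`, so the inequality is sharp at the ends of `[0, 1]`: a
Taylor bound for `exp x` suffices away from `1`, while near `1` one expands `exp (1 - x)`. -/
lemma exp_one_sub_one_mul_le {x : ℝ} (hx0 : 0 ≤ x) (hx1 : x ≤ 1) :
    (exp 1 - 1) * x ≤ (exp 1 - 1 + x) * (1 - exp (-x)) := by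
  have key : exp 1 - 1 + x ≤ exp x * (exp 1 - 1 - (exp 1 - 2) * x) := by
    rcases le_total x (4 / 5) with hx | hx
    · exact exp_one_sub_one_add_le_of_le_four_fifths hx0 hx
    · exact exp_one_sub_one_add_le_of_four_fifths_le hx hx1
  have := mul_le_mul_of_nonneg_left key (exp_pos (-x)).le
  rw [← mul_assoc, ← exp_add, neg_add_cancel, exp_zero, one_mul] at this
  nlinarith

lemma exp_mul_le_one_add_mul (a : ℝ) {y : ℝ} (hy : y ∈ Set.Icc (0 : ℝ) 1) :
    exp (a * y) ≤ 1 + (exp a - 1) * y := by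
  have := convexOn_exp.2 (Set.mem_univ a) (Set.mem_univ 0) hy.1 (sub_nonneg.2 hy.2)
    (add_sub_cancel y 1)
  simp only [smul_eq_mul, mul_zero, add_zero, exp_zero, mul_one] at this
  calc exp (a * y) = exp (y * a) := by rw [mul_comm]
    _ ≤ y * exp a + (1 - y) := this
    _ = 1 + (exp a - 1) * y := by ring


variable {ι : Type*} [Fintype ι]

noncomputable section

def mixLoss (η : ℝ) (w ℓ : ι → ℝ) : ℝ := -(1 / η) * log (∑ k, w k * exp (-η * ℓ k))

section Round

variable {η : ℝ} {w ℓ : ι → ℝ}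

lemma one_sub_exp_neg_mul_le_mixLoss [Nonempty ι] (hη : 0 < η) (hw : ∀ k, 0 < w k)
    (hw₁ : ∑ k, w k = 1) (hℓ : ∀ k, ℓ k ∈ Set.Icc (0 : ℝ) 1) :
    (1 - exp (-η)) * ∑ k, w k * ℓ k ≤ η * mixLoss η w ℓ := by
  have hpos : 0 < ∑ k, w k * exp (-η * ℓ k) :=
    sum_pos (fun k _ => mul_pos (hw k) (exp_pos _)) univ_nonempty
  have hle : ∑ k, w k * exp (-η * ℓ k) ≤ 1 - (1 - exp (-η)) * ∑ k, w k * ℓ k :=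
    calc ∑ k, w k * exp (-η * ℓ k) ≤ ∑ k, w k * (1 + (exp (-η) - 1) * ℓ k) :=
          sum_le_sum fun k _ => mul_le_mul_of_nonneg_left (exp_mul_le_one_add_mul _ (hℓ k))
            (hw k).le
      _ = ∑ k, w k - (1 - exp (-η)) * ∑ k, w k * ℓ k := by
          rw [mul_sum, ← sum_sub_distrib]
          exact sum_congr rfl fun k _ => by ring
      _ = 1 - (1 - exp (-η)) * ∑ k, w k * ℓ k := by rw [hw₁]
  have hlog := log_le_sub_one_of_pos hpos
  rw [mixLoss, ← mul_assoc, mul_neg, mul_one_div_cancel hη.ne', neg_one_mul]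
  linarith

lemma sum_mul_sub_mixLoss_le [Nonempty ι] (hη : η ∈ Set.Ioc (0 : ℝ) 1) (hw : ∀ k, 0 < w k)
    (hw₁ : ∑ k, w k = 1) (hℓ : ∀ k, ℓ k ∈ Set.Icc (0 : ℝ) 1) :
    ∑ k, w k * ℓ k - mixLoss η w ℓ ≤ η / (exp 1 - 1) * mixLoss η w ℓ := by
  obtain ⟨hη₀, hη₁⟩ := hη
  have hc := exp_one_sub_one_pos
  have hloss : 0 ≤ ∑ k, w k * ℓ k := sum_nonneg fun k _ => mul_nonneg (hw k).le (hℓ k).1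
  have hmix := one_sub_exp_neg_mul_le_mixLoss hη₀ hw hw₁ hℓ
  have hkey := mul_le_mul_of_nonneg_right (exp_one_sub_one_mul_le hη₀.le hη₁) hloss
  have : (exp 1 - 1) * ∑ k, w k * ℓ k ≤ (exp 1 - 1 + η) * mixLoss η w ℓ := by
    refine le_of_mul_le_mul_left ?_ hη₀
    nlinarith [mul_le_mul_of_nonneg_left hmix (by linarith : 0 ≤ exp 1 - 1 + η)]
  rw [div_mul_eq_mul_div, le_div_iff₀ hc]
  linarith

end Round

def cumLoss (ℓ : ℕ → ι → ℝ) (t : ℕ) (k : ι) : ℝ := ∑ s ∈ range t, ℓ s k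

def potential (η : ℝ) (ℓ : ℕ → ι → ℝ) (t : ℕ) : ℝ := ∑ k, exp (-η * cumLoss ℓ t k)

def weights (η : ℝ) (ℓ : ℕ → ι → ℝ) (t : ℕ) (k : ι) : ℝ :=
  exp (-η * cumLoss ℓ t k) / potential η ℓ t

section Potential

variable (η : ℝ) (ℓ : ℕ → ι → ℝ)

lemma potential_pos [Nonempty ι] (t : ℕ) : 0 < potential η ℓ t :=
  sum_pos (fun _ _ => exp_pos _) univ_nonempty

lemma potential_zero : potential η ℓ 0 = Fintype.card ι := by
  simp [potential, cumLoss]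

lemma exp_neg_mul_cumLoss_le_potential (t : ℕ) (k : ι) :
    exp (-η * cumLoss ℓ t k) ≤ potential η ℓ t :=
  single_le_sum (f := fun k => exp (-η * cumLoss ℓ t k)) (fun _ _ => (exp_pos _).le) (mem_univ k)

lemma weights_pos [Nonempty ι] (t : ℕ) (k : ι) : 0 < weights η ℓ t k :=
  div_pos (exp_pos _) (potential_pos η ℓ t)

lemma sum_weights [Nonempty ι] (t : ℕ) : ∑ k, weights η ℓ t k = 1 := by
  simp only [weights, ← sum_div]
  exact div_self (potential_pos η ℓ t).ne'

lemma sum_weights_mul_exp (t : ℕ) :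
    ∑ k, weights η ℓ t k * exp (-η * ℓ t k) = potential η ℓ (t + 1) / potential η ℓ t := by
  simp only [weights, potential, cumLoss, sum_range_succ, div_mul_eq_mul_div, ← exp_add,
    mul_add, ← sum_div]

lemma sum_mixLoss_weights [Nonempty ι] (T : ℕ) :
    ∑ t ∈ range T, mixLoss η (weights η ℓ t) (ℓ t)
      = (log (Fintype.card ι) - log (potential η ℓ T)) / η := by
  have hstep : ∀ t, mixLoss η (weights η ℓ t) (ℓ t)
      = -(1 / η) * (log (potential η ℓ (t + 1)) - log (potential η ℓ t)) := fun t => by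
    rw [mixLoss, sum_weights_mul_exp, log_div (potential_pos η ℓ _).ne' (potential_pos η ℓ _).ne']
  rw [sum_congr rfl fun t _ => hstep t, ← mul_sum,
    sum_range_sub (fun t => log (potential η ℓ t)), potential_zero]
  ring

lemma sum_mixLoss_weights_le [Nonempty ι] {η : ℝ} (hη : 0 < η) (T : ℕ) (k : ι) :
    ∑ t ∈ range T, mixLoss η (weights η ℓ t) (ℓ t)
      ≤ cumLoss ℓ T k + log (Fintype.card ι) / η := by
  have := log_le_log (exp_pos _) (exp_neg_mul_cumLoss_le_potential η ℓ T k)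
  rw [log_exp] at this
  have : -cumLoss ℓ T k ≤ log (potential η ℓ T) / η := by rw [le_div_iff₀ hη]; linarith
  rw [sum_mixLoss_weights, sub_div]
  linarith

end Potential

end

lemma sum_sub_mixLoss_weights_le [Nonempty ι] {η : ℝ} {ℓ : ℕ → ι → ℝ}
    (hη : η ∈ Set.Ioc (0 : ℝ) 1) (hℓ : ∀ t k, ℓ t k ∈ Set.Icc (0 : ℝ) 1) (T : ℕ) (k : ι) :
    ∑ t ∈ range T, (∑ j, weights η ℓ t j * ℓ t j - mixLoss η (weights η ℓ t) (ℓ t))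
      ≤ (η * cumLoss ℓ T k + log (Fintype.card ι)) / (exp 1 - 1) := by
  calc ∑ t ∈ range T, (∑ j, weights η ℓ t j * ℓ t j - mixLoss η (weights η ℓ t) (ℓ t))
      ≤ ∑ t ∈ range T, η / (exp 1 - 1) * mixLoss η (weights η ℓ t) (ℓ t) :=
        sum_le_sum fun t _ =>
          sum_mul_sub_mixLoss_le hη (weights_pos η ℓ t) (sum_weights η ℓ t) (hℓ t)
    _ = η / (exp 1 - 1) * ∑ t ∈ range T, mixLoss η (weights η ℓ t) (ℓ t) := by rw [mul_sum]
    _ ≤ η / (exp 1 - 1) * (cumLoss ℓ T k + log (Fintype.card ι) / η) :=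
        mul_le_mul_of_nonneg_left (sum_mixLoss_weights_le ℓ hη.1 T k)
          (div_pos hη.1 exp_one_sub_one_pos).le
    _ = (η * cumLoss ℓ T k + log (Fintype.card ι)) / (exp 1 - 1) := by
        field_simp [hη.1.ne']

lemma le_sq_mul_of_budget_le {η c a L : ℝ} (hη : 0 < η) (hc : 0 < c)
    (h : (1 / η + 1 / c) * a ≤ (η * L + a) / c) : c * a ≤ η ^ 2 * L := by
  have : a / η ≤ η * L / c := by
    have e₁ : (1 / η + 1 / c) * a = a / η + a / c := by ring
    have e₂ : (η * L + a) / c = η * L / c + a / c := by ring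
    linarith
  rw [div_le_div_iff₀ hη hc] at this
  linarith

lemma sqrt_div_le_of_le_sq_mul {a L η : ℝ} (ha : 0 ≤ a) (hη : 0 ≤ η) (h : a ≤ η ^ 2 * L) :
    √(a / L) ≤ η := by
  refine sqrt_le_iff.2 ⟨hη, ?_⟩
  rcases le_or_gt L 0 with hL | hL
  · have : a = 0 := le_antisymm (h.trans (mul_nonpos_of_nonneg_of_nonpos (sq_nonneg η) hL)) ha
    simp [this, sq_nonneg]
  · rwa [div_le_iff₀ hL]

lemma two_mul_div_le_sqrt {η c a L : ℝ} (hη : 0 < η) (hc : 0 < c) (ha : 0 ≤ a)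
    (h : c * a ≤ η ^ 2 * L) : 2 * a / η ≤ √(4 / c * L * a) := by
  refine le_sqrt_of_sq_le ?_
  rw [div_pow, div_le_iff₀ (pow_pos hη 2),
    show 4 / c * L * a * η ^ 2 = 4 * a * (η ^ 2 * L) / c by ring, le_div_iff₀ hc]
  nlinarith [mul_le_mul_of_nonneg_left h (by positivity : (0 : ℝ) ≤ 4 * a)]

end Hedge

open Hedge in
theorem hedge_budget_regret (K T : ℕ) (hK : 2 ≤ K)
    (ℓ : ℕ → Fin K → ℝ) (η : ℝ) (hη : η ∈ Set.Ioc (0:ℝ) 1)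
    (hℓ : ∀ t k, ℓ t k ∈ Set.Icc (0:ℝ) 1)
    (L : ℕ → Fin K → ℝ) (hL : ∀ t k, L t k = ∑ s ∈ Finset.range t, ℓ s k)
    (w : ℕ → Fin K → ℝ)
    (hw : ∀ t k, w t k = Real.exp (-η * L t k) / ∑ k', Real.exp (-η * L t k'))
    (Lstar Δ : ℝ)
    (hLstar : Lstar = Finset.univ.inf' (Finset.univ_nonempty_iff.2 ⟨⟨0, by omega⟩⟩) (L T))
    (hΔ : Δ = ∑ t ∈ Finset.range T,
        ((∑ k, w t k * ℓ t k) + (1/η) * Real.log (∑ k, w t k * Real.exp (-η * ℓ t k))))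
    (hist : (1/η + 1/(Real.exp 1 - 1)) * Real.log K ≤ Δ)
    (hist' : Δ < (1/η + 1/(Real.exp 1 - 1)) * Real.log K + η/8) :
    η ≥ Real.sqrt ((Real.exp 1 - 1) * Real.log K / Lstar) ∧
    (∑ t ∈ Finset.range T, ∑ k, w t k * ℓ t k) - Lstar <
      Real.sqrt (4/(Real.exp 1 - 1) * Lstar * Real.log K)
        + Real.log K / (Real.exp 1 - 1) + 1/8 := by
  have : Nonempty (Fin K) := ⟨⟨0, by omega⟩⟩
  obtain rfl : L = cumLoss ℓ := funext₂ hL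
  obtain rfl : w = weights η ℓ := funext₂ hw
  obtain ⟨k₀, -, hk₀⟩ := exists_mem_eq_inf' univ_nonempty (cumLoss ℓ T)
  obtain rfl : Lstar = cumLoss ℓ T k₀ := hLstar.trans hk₀
  have hc := exp_one_sub_one_pos
  have hlogK : 0 < log K := log_pos (by exact_mod_cast hK.trans_lt' one_lt_two)
  have hmix := sum_mixLoss_weights_le ℓ hη.1 T k₀
  have hgap := sum_sub_mixLoss_weights_le hη hℓ T k₀
  rw [Fintype.card_fin] at hmix hgap
  have hΔ' : Δ = ∑ t ∈ range T, (∑ k, weights η ℓ t k * ℓ t k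
      - mixLoss η (weights η ℓ t) (ℓ t)) := by
    simp only [hΔ, mixLoss, neg_mul, sub_neg_eq_add]
  have hsq := le_sq_mul_of_budget_le hη.1 hc (hist.trans (hΔ' ▸ hgap))
  refine ⟨sqrt_div_le_of_le_sq_mul (by positivity) hη.1.le hsq, ?_⟩
  have hregret : ∑ t ∈ range T, ∑ k, weights η ℓ t k * ℓ t k - cumLoss ℓ T k₀
      = Δ + ∑ t ∈ range T, mixLoss η (weights η ℓ t) (ℓ t) - cumLoss ℓ T k₀ := by
    rw [hΔ', sum_sub_distrib]; ring
  have hbudget : (1 / η + 1 / (exp 1 - 1)) * log K = log K / η + log K / (exp 1 - 1) := by ring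
  have htwo : 2 * log K / η = log K / η + log K / η := by ring
  rw [hregret]
  linarith [two_mul_div_le_sqrt hη.1 hc hlogK.le hsq, hη.2]
end

section
/- For any η ∈ (0,1] and any α ∈ [0,1], the quantity g(α) = α + (1/η)·ln(1 − α + α·e^{-η}) satisfies g(α) ≤ (e−2)·η·min{α, 1−α}. -/
/-!
For `α ≤ 1/2`, bound `log x ≤ x - 1` and `exp (-η) ≤ 1 - η + η ^ 2 / 2` to get `g(α) ≤ αη/2`,
and `1/2 ≤ e - 2`. For `α ≥ 1/2`, pull `exp (-η)` out of the logarithm,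
`g(α) = α - 1 + (1/η) log (exp η (1 - α) + α)`, and bound again with `log x ≤ x - 1`, now
together with `exp η ≤ 1 + η + (e - 2) η ^ 2` on `[0, 1]`, which holds because on `[0, 1]` the
tail `∑_{n ≥ 2} x ^ n / n!` is at most `x ^ 2` times its value `e - 2` at `x = 1`.
-/

open Real Finset Nat

lemma Real.exp_sub_sum_range_le_pow_mul {x : ℝ} (h0 : 0 ≤ x) (h1 : x ≤ 1) (n : ℕ) :
    exp x - ∑ i ∈ range n, x ^ i / i ! ≤ x ^ n * (exp 1 - ∑ i ∈ range n, 1 / (i ! : ℝ)) := by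
  have tail (y : ℝ) :
      HasSum (fun k ↦ y ^ (k + n) / (k + n)!) (exp y - ∑ i ∈ range n, y ^ i / i !) := by
    refine (hasSum_nat_add_iff' n).mpr ?_
    rw [Real.exp_eq_exp_ℝ]
    exact NormedSpace.expSeries_div_hasSum_exp y
  refine hasSum_le (fun k ↦ ?_) (tail x) (by simpa using (tail 1).mul_left (x ^ n))
  rw [pow_add, mul_comm, mul_div_assoc, ← one_div]
  gcongr
  exact pow_le_one₀ h0 h1

lemma Real.exp_le_one_add_add_exp_one_sub_two_mul_sq {x : ℝ} (h0 : 0 ≤ x) (h1 : x ≤ 1) :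
    exp x ≤ 1 + x + (exp 1 - 2) * x ^ 2 := by
  have := Real.exp_sub_sum_range_le_pow_mul h0 h1 2
  norm_num [sum_range_succ] at this
  linarith

lemma Real.exp_neg_le_one_sub_add_sq_div_two {x : ℝ} (hx : 0 ≤ x) :
    exp (-x) ≤ 1 - x + x ^ 2 / 2 := by
  have hq := quadratic_le_exp_of_nonneg hx
  rw [exp_neg, inv_le_iff_one_le_mul₀ (exp_pos x)]
  nlinarith [mul_le_mul_of_nonneg_left hq (by nlinarith : (0 : ℝ) ≤ 1 - x + x ^ 2 / 2),
    pow_nonneg hx 4]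

lemma Real.half_le_exp_one_sub_two : (1 : ℝ) / 2 ≤ exp 1 - 2 := by
  linarith [exp_one_gt_d9]

noncomputable def mixabilityGap (η α : ℝ) : ℝ := α + (1 / η) * log (1 - α + α * exp (-η))

section
variable {η α : ℝ}

lemma mixabilityGap_le_mul_div_two (hη : 0 < η) (hα0 : 0 ≤ α) (hα1 : α ≤ 1) :
    mixabilityGap η α ≤ α * η / 2 := by
  have hexp := exp_neg_le_one_sub_add_sq_div_two hη.le
  have hexp_le_one : exp (-η) ≤ 1 := exp_le_one_iff.2 (neg_nonpos.2 hη.le)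
  have hpos : 0 < 1 - α + α * exp (-η) := by
    nlinarith [exp_pos (-η), mul_nonneg (sub_nonneg.2 hα1) (sub_nonneg.2 hexp_le_one)]
  have hlog : log (1 - α + α * exp (-η)) ≤ α * (-η + η ^ 2 / 2) := by
    nlinarith [log_le_sub_one_of_pos hpos]
  calc mixabilityGap η α ≤ α + (1 / η) * (α * (-η + η ^ 2 / 2)) := by
        unfold mixabilityGap
        gcongr
    _ = α * η / 2 := by field_simp; ring

lemma mixabilityGap_eq_sub_one_add (hη : 0 < η) (hα : α ≤ 1) :
    mixabilityGap η α = α - 1 + (1 / η) * log (exp η * (1 - α) + α) := by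
  have hpos : 0 < exp η * (1 - α) + α := by nlinarith [one_le_exp hη.le]
  have hfactor : 1 - α + α * exp (-η) = exp (-η) * (exp η * (1 - α) + α) := by
    rw [exp_neg]; field_simp
  rw [mixabilityGap, hfactor, log_mul (exp_pos _).ne' hpos.ne', log_exp]
  field_simp
  ring

lemma mixabilityGap_le_exp_one_sub_two_mul (hη0 : 0 < η) (hη1 : η ≤ 1) (hα : α ≤ 1) :
    mixabilityGap η α ≤ (exp 1 - 2) * η * (1 - α) := by
  have hexp := exp_le_one_add_add_exp_one_sub_two_mul_sq hη0.le hη1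
  have hpos : 0 < exp η * (1 - α) + α := by nlinarith [one_le_exp hη0.le]
  have hlog : log (exp η * (1 - α) + α) ≤ (1 - α) * (η + (exp 1 - 2) * η ^ 2) := by
    nlinarith [log_le_sub_one_of_pos hpos]
  calc mixabilityGap η α ≤ α - 1 + (1 / η) * ((1 - α) * (η + (exp 1 - 2) * η ^ 2)) := by
        rw [mixabilityGap_eq_sub_one_add hη0 hα]
        gcongr
    _ = (exp 1 - 2) * η * (1 - α) := by field_simp; ring

end

theorem binary_mixability_gap (η α : ℝ) (hη : η ∈ Set.Ioc (0:ℝ) 1)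
    (hα : α ∈ Set.Icc (0:ℝ) 1) :
    α + (1/η) * Real.log (1 - α + α * Real.exp (-η)) ≤
      (Real.exp 1 - 2) * η * min α (1 - α) := by
  obtain ⟨hη0, hη1⟩ := hη
  obtain ⟨hα0, hα1⟩ := hα
  change mixabilityGap η α ≤ _
  rcases le_total α (1 - α) with h | h
  · rw [min_eq_left h]
    calc mixabilityGap η α ≤ α * η / 2 := mixabilityGap_le_mul_div_two hη0 hα0 hα1
      _ = 1 / 2 * η * α := by ring
      _ ≤ (exp 1 - 2) * η * α := by gcongr; exact half_le_exp_one_sub_two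
  · rw [min_eq_right h]
    exact mixabilityGap_le_exp_one_sub_two_mul hη0 hη1 hα1
end

section
/- For any probability vector w on {1,...,K}, any loss vector ℓ ∈ [0,1]^K, and any η ∈ (0,1], the mixability gap δ = w·ℓ + (1/η)·ln(w·e^{-ηℓ}) satisfies δ ≤ (e−2)·η·(1 − w^*), where w^* = max_k w_k. -/
/-!
On `[-1, 1]` the exponential lies below the parabola `1 + x + (e - 2) x²`. Applied to
`-η (ℓ k - w·ℓ)` and averaged under `w`, together with `log (1 + y) ≤ y`, this bounds the
mixability gap by `(e - 2) η` times the `w`-variance of `ℓ`. The variance is at most the second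
moment about any point, in particular about `ℓ k*` for a heaviest action `k*`, and since the
losses lie in `[0, 1]` that moment is at most the weight `1 - w k*` of the other actions.
-/

open Finset Real

/-- The constant is `e - 2 = ∑_{n ≥ 2} 1 / n!`, and `xⁿ ≤ x²` for `|x| ≤ 1` and `n ≥ 2`. -/
theorem Real.exp_le_one_add_add_mul_sq {x : ℝ} (hx : |x| ≤ 1) :
    exp x ≤ 1 + x + (exp 1 - 2) * x ^ 2 := by
  have tail (y : ℝ) :
      HasSum (fun n : ℕ ↦ y ^ (n + 2) / (n + 2).factorial) (exp y - 1 - y) := by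
    have := (hasSum_nat_add_iff' 2).2 (NormedSpace.expSeries_div_hasSum_exp y)
    rw [← Real.exp_eq_exp_ℝ] at this
    simpa [sum_range_succ, sub_sub] using this
  have hle := hasSum_le (fun n ↦ ?_) (tail x) ((tail 1).mul_left (x ^ 2))
  · linarith
  rw [one_pow, mul_one_div, pow_add]
  gcongr
  exact mul_le_of_le_one_left (sq_nonneg x)
    ((le_abs_self _).trans ((abs_pow x n).trans_le (pow_le_one₀ (abs_nonneg x) hx)))

section WeightedMoments

variable {ι : Type*} [Fintype ι]

def weightedMean (w x : ι → ℝ) : ℝ := ∑ k, w k * x k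

def weightedVar (w x : ι → ℝ) : ℝ := ∑ k, w k * (x k - weightedMean w x) ^ 2

theorem weightedMean_const_mul (w x : ι → ℝ) (c : ℝ) :
    weightedMean w (fun k ↦ c * x k) = c * weightedMean w x := by
  simp only [weightedMean, mul_sum, mul_left_comm]

theorem weightedVar_const_mul (w x : ι → ℝ) (c : ℝ) :
    weightedVar w (fun k ↦ c * x k) = c ^ 2 * weightedVar w x := by
  simp only [weightedVar, weightedMean_const_mul, ← mul_sub, mul_pow, mul_sum, mul_left_comm]

variable {w : ι → ℝ}

theorem sum_mul_sub_weightedMean (hw1 : ∑ k, w k = 1) (x : ι → ℝ) :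
    ∑ k, w k * (x k - weightedMean w x) = 0 := by
  simp only [mul_sub, sum_sub_distrib, ← sum_mul, hw1, one_mul, weightedMean, sub_self]

theorem weightedVar_add_sq (hw1 : ∑ k, w k = 1) (x : ι → ℝ) (b : ℝ) :
    weightedVar w x + (weightedMean w x - b) ^ 2 = ∑ k, w k * (x k - b) ^ 2 := by
  have h := sum_mul_sub_weightedMean hw1 x
  set m := weightedMean w x
  calc weightedVar w x + (m - b) ^ 2
      = ∑ k, (w k * (x k - m) ^ 2 + 2 * (m - b) * (w k * (x k - m))
          + (m - b) ^ 2 * w k) := by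
        rw [sum_add_distrib, sum_add_distrib, ← mul_sum, ← mul_sum, h, hw1]
        simp only [weightedVar, m]
        ring
    _ = ∑ k, w k * (x k - b) ^ 2 := sum_congr rfl fun k _ ↦ by ring

theorem weightedVar_le_sum_mul_sq_sub (hw1 : ∑ k, w k = 1) (x : ι → ℝ) (b : ℝ) :
    weightedVar w x ≤ ∑ k, w k * (x k - b) ^ 2 := by
  rw [← weightedVar_add_sq hw1 x b]
  exact le_add_of_nonneg_right (sq_nonneg _)

theorem sum_mul_sq_sub_le_one_sub (hw : ∀ k, 0 ≤ w k) (hw1 : ∑ k, w k = 1) {x : ι → ℝ}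
    (hx : ∀ k, x k ∈ Set.Icc (0 : ℝ) 1) (j : ι) :
    ∑ k, w k * (x k - x j) ^ 2 ≤ 1 - w j := by
  classical
  rw [← sum_erase univ (a := j) (by simp), ← hw1, ← sum_erase_eq_sub (mem_univ j)]
  refine sum_le_sum fun k _ ↦ mul_le_of_le_one_right (hw k) ?_
  rw [sq_le_one_iff_abs_le_one]
  exact abs_sub_le_of_nonneg_of_le (hx k).1 (hx k).2 (hx j).1 (hx j).2

theorem weightedVar_le_one_sub (hw : ∀ k, 0 ≤ w k) (hw1 : ∑ k, w k = 1) {x : ι → ℝ}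
    (hx : ∀ k, x k ∈ Set.Icc (0 : ℝ) 1) (j : ι) :
    weightedVar w x ≤ 1 - w j :=
  (weightedVar_le_sum_mul_sq_sub hw1 x (x j)).trans (sum_mul_sq_sub_le_one_sub hw hw1 hx j)

theorem weightedMean_mem_Icc (hw : ∀ k, 0 ≤ w k) (hw1 : ∑ k, w k = 1) {x : ι → ℝ}
    {a b : ℝ} (hx : ∀ k, x k ∈ Set.Icc a b) :
    weightedMean w x ∈ Set.Icc a b := by
  constructor
  · calc a = ∑ k, w k * a := by rw [← sum_mul, hw1, one_mul]
      _ ≤ weightedMean w x := sum_le_sum fun k _ ↦ mul_le_mul_of_nonneg_left (hx k).1 (hw k)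
  · calc weightedMean w x ≤ ∑ k, w k * b :=
          sum_le_sum fun k _ ↦ mul_le_mul_of_nonneg_left (hx k).2 (hw k)
      _ = b := by rw [← sum_mul, hw1, one_mul]

theorem sum_mul_exp_pos (hw : ∀ k, 0 ≤ w k) (hw1 : ∑ k, w k = 1) (x : ι → ℝ) :
    0 < ∑ k, w k * exp (x k) := by
  obtain ⟨k, -, hk⟩ : ∃ k ∈ univ, (0 : ι → ℝ) k < w k :=
    exists_lt_of_sum_lt (by simp [hw1])
  exact sum_pos' (fun k _ ↦ mul_nonneg (hw k) (exp_pos _).le)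
    ⟨k, mem_univ k, mul_pos hk (exp_pos _)⟩

theorem log_sum_mul_exp_le (hw : ∀ k, 0 ≤ w k) (hw1 : ∑ k, w k = 1) {x : ι → ℝ}
    (hx : ∀ k, |x k - weightedMean w x| ≤ 1) :
    log (∑ k, w k * exp (x k)) ≤ weightedMean w x + (exp 1 - 2) * weightedVar w x := by
  set m := weightedMean w x
  set c := exp 1 - 2
  have hc : 0 ≤ c := by linarith [exp_one_gt_d9]
  have hvar : 0 ≤ weightedVar w x := sum_nonneg fun k _ ↦ mul_nonneg (hw k) (sq_nonneg _)
  have hsum : ∑ k, w k * exp (x k) ≤ exp m * (1 + c * weightedVar w x) :=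
    calc ∑ k, w k * exp (x k)
        ≤ ∑ k, w k * (exp m * (1 + (x k - m) + c * (x k - m) ^ 2)) := by
          refine sum_le_sum fun k _ ↦ mul_le_mul_of_nonneg_left ?_ (hw k)
          rw [← add_sub_cancel m (x k), exp_add, add_sub_cancel_left]
          exact mul_le_mul_of_nonneg_left (exp_le_one_add_add_mul_sq (hx k)) (exp_pos m).le
      _ = exp m * (∑ k, w k + ∑ k, w k * (x k - m) + c * weightedVar w x) := by
        rw [weightedVar, mul_sum, ← sum_add_distrib, ← sum_add_distrib, mul_sum]
        exact sum_congr rfl fun k _ ↦ by ring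
      _ = exp m * (1 + c * weightedVar w x) := by
        rw [hw1, sum_mul_sub_weightedMean hw1, add_zero]
  calc log (∑ k, w k * exp (x k))
      ≤ log (exp m * (1 + c * weightedVar w x)) := log_le_log (sum_mul_exp_pos hw hw1 x) hsum
    _ = m + log (1 + c * weightedVar w x) := by
        rw [log_mul (exp_ne_zero m) (by positivity), log_exp]
    _ ≤ m + c * weightedVar w x := by
        linarith [log_le_sub_one_of_pos (by positivity : 0 < 1 + c * weightedVar w x)]

end WeightedMoments

theorem mixability_gap_posterior_bound (K : ℕ) (hK : 0 < K)
    (w ℓ : Fin K → ℝ) (η : ℝ) (hη : η ∈ Set.Ioc (0:ℝ) 1)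
    (hw : ∀ k, 0 ≤ w k) (hw1 : ∑ k, w k = 1)
    (hℓ : ∀ k, ℓ k ∈ Set.Icc (0:ℝ) 1) :
    (∑ k, w k * ℓ k) + (1/η) * Real.log (∑ k, w k * Real.exp (-η * ℓ k)) ≤
      (Real.exp 1 - 2) * η *
        (1 - Finset.univ.sup' (Finset.univ_nonempty_iff.2 ⟨⟨0, hK⟩⟩) w) := by
  obtain ⟨hη0, hη1⟩ := hη
  obtain ⟨j, -, hj⟩ := exists_mem_eq_sup' (univ_nonempty_iff.2 ⟨⟨0, hK⟩⟩) w
  rw [hj]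
  have hdev : ∀ k, |-η * ℓ k - weightedMean w (fun k ↦ -η * ℓ k)| ≤ 1 := fun k ↦ by
    obtain ⟨hm0, hm1⟩ := weightedMean_mem_Icc hw hw1 hℓ
    rw [weightedMean_const_mul, ← mul_sub, abs_mul, abs_neg, abs_of_pos hη0]
    exact mul_le_one₀ hη1 (abs_nonneg _)
      (abs_sub_le_of_nonneg_of_le (hℓ k).1 (hℓ k).2 hm0 hm1)
  have hlog := log_sum_mul_exp_le hw hw1 hdev
  rw [weightedMean_const_mul, weightedVar_const_mul, neg_sq] at hlog
  have hc : 0 ≤ exp 1 - 2 := by linarith [exp_one_gt_d9]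
  calc weightedMean w ℓ + 1 / η * log (∑ k, w k * exp (-η * ℓ k))
      ≤ weightedMean w ℓ
          + 1 / η * (-η * weightedMean w ℓ + (exp 1 - 2) * (η ^ 2 * weightedVar w ℓ)) := by
        gcongr
    _ = (exp 1 - 2) * η * weightedVar w ℓ := by field_simp; ring
    _ ≤ (exp 1 - 2) * η * (1 - w j) := by gcongr; exact weightedVar_le_one_sub hw hw1 hℓ j
end

section
/- Let α, β, η > 0 and τ, T ∈ ℕ with τ ≤ T. Suppose for each t ∈ {τ,...,T} the cumulative losses satisfy L_t^{k^*} = min_k L_t^k and L_t^k − L_t^{k^*} ≥ α·t^β for all k ≠ k^*, and let w_{t+1}^*(η) = e^{-η L_t^{k^*}}/Σ_k e^{-η L_t^k}. Then Σ_{t=τ}^T (1 − w_{t+1}^*(η)) ≤ (K−1)·(αη)^{-1/β}·Γ(1 + 1/β). -/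
/-! Each competitor's weight is at most `e^{-αη t^β}` times the leader's, so `1 - w_{t+1}^*` is at
most `(K - 1) e^{-αη t^β}`. The sum of the decreasing function `x ↦ e^{-αη x^β}` over the integers
`t ≥ 1` is dominated by its integral over `(0, ∞)`, which is `(αη)^{-1/β} Γ(1 + 1/β)`. -/

open Real MeasureTheory Set

theorem one_sub_exp_div_sum_exp_le {ι : Type*} [Fintype ι] (x : ι → ℝ) (i : ι) (d : ℝ)
    (hgap : ∀ j ≠ i, x j ≤ x i - d) :
    1 - exp (x i) / ∑ j, exp (x j) ≤ (Fintype.card ι - 1) * exp (-d) := by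
  classical
  set r := ∑ j ∈ Finset.univ.erase i, exp (x j)
  have hr : 0 ≤ r := Finset.sum_nonneg fun _ _ => (exp_pos _).le
  have hrest : r ≤ (Fintype.card ι - 1) * exp (-d) * exp (x i) :=
    calc r ≤ ∑ _j ∈ Finset.univ.erase i, exp (-d) * exp (x i) :=
          Finset.sum_le_sum fun j hj => by
            rw [← exp_add]
            exact exp_le_exp.2 (by linarith [hgap j (Finset.ne_of_mem_erase hj)])
      _ = _ := by
          rw [Finset.sum_const, Finset.card_erase_of_mem (Finset.mem_univ i), Finset.card_univ,
            nsmul_eq_mul, Nat.cast_pred (Fintype.card_pos_iff.2 ⟨i⟩), mul_assoc]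
  rw [← Finset.sum_erase_add _ _ (Finset.mem_univ i)]
  calc 1 - exp (x i) / (r + exp (x i)) = r / (r + exp (x i)) := by field_simp; ring
    _ ≤ r / exp (x i) := div_le_div_of_nonneg_left hr (exp_pos _) (by linarith)
    _ ≤ _ := by rwa [div_le_iff₀ (exp_pos _)]

theorem sum_Icc_le_integral_Ioi_of_antitoneOn {f : ℝ → ℝ} (hf : AntitoneOn f (Ici 0))
    (hf0 : ∀ x ∈ Ioi 0, 0 ≤ f x) (hfi : IntegrableOn f (Ioi 0)) {τ : ℕ} (hτ : 1 ≤ τ) (T : ℕ) :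
    ∑ t ∈ Finset.Icc τ T, f t ≤ ∫ x in Ioi 0, f x :=
  calc ∑ t ∈ Finset.Icc τ T, f t ≤ ∑ t ∈ Finset.Icc 1 T, f t :=
        Finset.sum_le_sum_of_subset_of_nonneg (Finset.Icc_subset_Icc_left hτ) fun t ht _ =>
          hf0 t (mem_Ioi.2 (Nat.cast_pos.2 (Finset.mem_Icc.1 ht).1))
    _ = ∑ i ∈ Finset.range T, f (0 + ↑(i + 1)) := by
        rw [Finset.range_eq_Ico, Finset.sum_Ico_add' (fun i : ℕ => f (0 + (i : ℝ))),
          Finset.Ico_add_one_right_eq_Icc]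
        simp
    _ ≤ ∫ x in (0 : ℝ)..0 + T, f x :=
        AntitoneOn.sum_le_integral (hf.mono Icc_subset_Ici_self)
    _ ≤ ∫ x in Ioi 0, f x := by
        rw [zero_add, intervalIntegral.integral_of_le (Nat.cast_nonneg T)]
        exact setIntegral_mono_set hfi (ae_restrict_of_forall_mem measurableSet_Ioi hf0)
          Ioc_subset_Ioi_self.eventuallyLE

theorem sum_Icc_exp_neg_mul_rpow_le {c β : ℝ} (hc : 0 < c) (hβ : 0 < β) {τ : ℕ} (hτ : 1 ≤ τ)
    (T : ℕ) :
    ∑ t ∈ Finset.Icc τ T, exp (-c * (t : ℝ) ^ β) ≤ c ^ (-(1 / β)) * Gamma (1 + 1 / β) := by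
  have hanti : AntitoneOn (fun x : ℝ => exp (-c * x ^ β)) (Ici 0) := fun x hx y _ hxy =>
    exp_le_exp.2 (by nlinarith [rpow_le_rpow hx hxy hβ.le])
  have hint : IntegrableOn (fun x : ℝ => exp (-c * x ^ β)) (Ioi 0) := by
    simpa using integrableOn_rpow_mul_exp_neg_mul_rpow (s := 0) neg_one_lt_zero hβ hc
  calc ∑ t ∈ Finset.Icc τ T, exp (-c * (t : ℝ) ^ β)
      ≤ ∫ x in Ioi 0, exp (-c * x ^ β) :=
        sum_Icc_le_integral_Ioi_of_antitoneOn hanti (fun _ _ => (exp_pos _).le) hint hτ T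
    _ = c ^ (-(1 / β)) * Gamma (1 + 1 / β) := by
        rw [integral_exp_neg_mul_rpow hβ hc, neg_div, add_comm]

theorem posterior_convergence_sum_bound_general (K : ℕ)
    (L : ℕ → Fin K → ℝ) (kstar : Fin K)
    (α β η : ℝ) (hα : 0 < α) (hβ : 0 < β) (hη : 0 < η)
    (τ T : ℕ) (hτ : 1 ≤ τ)
    (hdiv : ∀ t ∈ Finset.Icc τ T, ∀ k, k ≠ kstar →
      L t k - L t kstar ≥ α * (t : ℝ) ^ β) :
    ∑ t ∈ Finset.Icc τ T,
        (1 - Real.exp (-η * L t kstar) / ∑ k, Real.exp (-η * L t k)) ≤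
      ((K : ℝ) - 1) * (α * η) ^ (-(1/β)) * Real.Gamma (1 + 1/β) := by
  have hK : (1 : ℝ) ≤ K := by exact_mod_cast Fin.pos kstar
  have hterm : ∀ t ∈ Finset.Icc τ T,
      1 - exp (-η * L t kstar) / ∑ k, exp (-η * L t k) ≤
        ((K : ℝ) - 1) * exp (-(α * η) * (t : ℝ) ^ β) := fun t ht => by
    have := one_sub_exp_div_sum_exp_le (fun k => -η * L t k) kstar (η * (α * (t : ℝ) ^ β))
      fun k hk => by nlinarith [hdiv t ht k hk]
    simpa [mul_assoc, mul_left_comm] using this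
  calc _ ≤ ∑ t ∈ Finset.Icc τ T, ((K : ℝ) - 1) * exp (-(α * η) * (t : ℝ) ^ β) :=
        Finset.sum_le_sum hterm
    _ = ((K : ℝ) - 1) * ∑ t ∈ Finset.Icc τ T, exp (-(α * η) * (t : ℝ) ^ β) :=
        (Finset.mul_sum ..).symm
    _ ≤ ((K : ℝ) - 1) * (α * η) ^ (-(1/β)) * Real.Gamma (1 + 1/β) := by
        rw [mul_assoc]
        exact mul_le_mul_of_nonneg_left
          (sum_Icc_exp_neg_mul_rpow_le (mul_pos hα hη) hβ hτ T) (by linarith)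

theorem posterior_convergence_sum_bound (K : ℕ) (hK : 0 < K)
    (L : ℕ → Fin K → ℝ) (kstar : Fin K)
    (α β η : ℝ) (hα : 0 < α) (hβ : 0 < β) (hη : 0 < η)
    (τ T : ℕ) (hτ : 1 ≤ τ) (hτT : τ ≤ T)
    (hmin : ∀ t ∈ Finset.Icc τ T, ∀ k, L t kstar ≤ L t k)
    (hdiv : ∀ t ∈ Finset.Icc τ T, ∀ k, k ≠ kstar →
      L t k - L t kstar ≥ α * (t : ℝ) ^ β) :
    ∑ t ∈ Finset.Icc τ T,
        (1 - Real.exp (-η * L t kstar) / ∑ k, Real.exp (-η * L t k)) ≤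
      ((K : ℝ) - 1) * (α * η) ^ (-(1/β)) * Real.Gamma (1 + 1/β) :=
  posterior_convergence_sum_bound_general K L kstar α β η hα hβ hη τ T hτ hdiv
end
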